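/- Let x₀ ∈ ℝⁿ be k-sparse with support S, f = ℓ₁-norm, and λ ≥ 0. Let h ∈ ℝⁿ have i.i.d. N(0,1) entries. Then the Gaussian squared distance δ(λ∂‖x₀‖₁) := E[dist²(h, λ∂‖x₀‖₁)] equals k(1+λ²) + (n−k)[(1+λ²)erfc(λ/√2) − √(2/π)λexp(−λ²/2)]. -/

import Mathlib

open MeasureTheory ProbabilityTheory Real
open scoped Pointwise

noncomputable def erfc (x : ℝ) : ℝ :=
  (2 / Real.sqrt π) * ∫ u in Set.Ioi x, Real.exp (-u ^ 2)

/-! The scaled subdifferential `l • ∂‖x₀‖₁` is the product over the coordinates of the sets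
`l • ∂|·|(x₀ i)`: the point `l * sign (x₀ i)` on the support and the interval `[-l, l]` off it.
Hence the squared distance splits into independent one-dimensional terms. On the support the
term is `(hᵢ - l * sign (x₀ i))²`, of mean `1 + l²`; off it the term is the squared soft threshold
`max (|hᵢ| - l) 0 ^ 2`, whose mean is twice the tail integral `∫_{x > l} (x - l)² φ(x) dx` of the
standard normal density `φ`, computed by one integration by parts from `φ' = -x φ`. -/

open Set Filter Topology
open scoped NNReal

lemma integral_sub_sq_gaussianReal (μ : ℝ) (v : ℝ≥0) (c : ℝ) :
    ∫ x, (x - c) ^ 2 ∂gaussianReal μ v = v + (μ - c) ^ 2 := by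
  have hid : MemLp (fun x => x - μ) 2 (gaussianReal μ v) :=
    (memLp_id_gaussianReal 2).sub (memLp_const μ)
  have hvar : ∫ x, (x - μ) ^ 2 ∂gaussianReal μ v = v := by
    simpa [variance_eq_integral measurable_id'.aemeasurable, integral_id_gaussianReal]
      using variance_fun_id_gaussianReal (μ := μ) (v := v)
  have hmean : ∫ x, (x - μ) ∂gaussianReal μ v = 0 := by
    have hint : Integrable (fun x => x) (gaussianReal μ v) :=
      (memLp_id_gaussianReal 1).integrable le_rfl
    rw [integral_sub hint (integrable_const μ), integral_id_gaussianReal]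
    simp
  calc ∫ x, (x - c) ^ 2 ∂gaussianReal μ v
      = ∫ x, ((x - μ) ^ 2 + 2 * (μ - c) * (x - μ) + (μ - c) ^ 2) ∂gaussianReal μ v := by
        congr 1 with x; ring
    _ = v + (μ - c) ^ 2 := by
        rw [integral_add (f := fun x => (x - μ) ^ 2 + 2 * (μ - c) * (x - μ))
          (hid.integrable_sq.add ((hid.integrable one_le_two).const_mul _)) (integrable_const _),
          integral_add (f := fun x => (x - μ) ^ 2) hid.integrable_sq
          ((hid.integrable one_le_two).const_mul _), integral_const_mul, hvar, hmean]
        simp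

lemma integral_comp_neg_gaussianReal (v : ℝ≥0) (f : ℝ → ℝ) :
    ∫ x, f (-x) ∂gaussianReal 0 v = ∫ x, f x ∂gaussianReal 0 v := by
  conv_rhs => rw [← neg_zero, ← gaussianReal_map_neg]
  exact (integral_map_equiv (MeasurableEquiv.neg ℝ) f).symm

lemma gaussianPDFReal_zero_one (x : ℝ) :
    gaussianPDFReal 0 1 x = (√(2 * π))⁻¹ * exp (-x ^ 2 / 2) := by
  simp [gaussianPDFReal]

lemma hasDerivAt_gaussianPDFReal_zero_one (x : ℝ) :
    HasDerivAt (gaussianPDFReal 0 1) (-x * gaussianPDFReal 0 1 x) x := by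
  have h := (((hasDerivAt_pow 2 x).fun_neg.div_const 2).exp).const_mul (√(2 * π))⁻¹
  rw [show gaussianPDFReal 0 1 = _ from funext gaussianPDFReal_zero_one]
  exact h.congr_deriv (by push_cast; ring)

lemma tendsto_rpow_mul_gaussianPDFReal_zero_one_atTop (s : ℝ) :
    Tendsto (fun x => x ^ s * gaussianPDFReal 0 1 x) atTop (𝓝 0) := by
  have h := ((tendsto_rpow_abs_mul_exp_neg_mul_sq_cocompact one_half_pos s).mono_left
    atTop_le_cocompact).const_mul (√(2 * π))⁻¹
  rw [mul_zero] at h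
  refine h.congr' ?_
  filter_upwards [eventually_ge_atTop 0] with x hx
  rw [gaussianPDFReal_zero_one, abs_of_nonneg hx]
  ring_nf

lemma integrable_gaussianPDFReal_mul {μ : ℝ} {v : ℝ≥0} (hv : v ≠ 0) {f : ℝ → ℝ}
    (hf : Integrable f (gaussianReal μ v)) :
    Integrable (fun x => gaussianPDFReal μ v x * f x) := by
  rw [gaussianReal_of_var_ne_zero μ hv, integrable_withDensity_iff_integrable_smul'
    (measurable_gaussianPDF μ v) (ae_of_all _ fun _ => gaussianPDF_lt_top)] at hf
  simpa [toReal_gaussianPDF] using hf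

lemma setIntegral_Ioi_gaussianPDFReal_zero_one_eq_erfc (l : ℝ) :
    ∫ x in Ioi l, gaussianPDFReal 0 1 x = erfc (l / √2) / 2 := by
  have h2 : (0 : ℝ) < √2 := by positivity
  have hsub : ∀ u, exp (-u ^ 2) = exp (-(√2 * u) ^ 2 / 2) := fun u => by
    rw [mul_pow, sq_sqrt zero_le_two]; ring_nf
  rw [erfc, funext hsub, integral_comp_mul_left_Ioi (fun x => exp (-x ^ 2 / 2)) _ h2,
    mul_div_cancel₀ _ h2.ne', smul_eq_mul]
  simp_rw [gaussianPDFReal_zero_one]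
  rw [integral_const_mul, sqrt_mul zero_le_two]
  field_simp

lemma setIntegral_Ioi_gaussianPDFReal_mul_sub_sq (l : ℝ) :
    ∫ x in Ioi l, gaussianPDFReal 0 1 x * (x - l) ^ 2 =
      (1 + l ^ 2) * (∫ x in Ioi l, gaussianPDFReal 0 1 x) - l * gaussianPDFReal 0 1 l := by
  have hderiv : ∀ x, HasDerivAt (fun x => -((x - 2 * l) * gaussianPDFReal 0 1 x))
      (gaussianPDFReal 0 1 x * (x - l) ^ 2 - (1 + l ^ 2) * gaussianPDFReal 0 1 x) x := fun x =>
    (((hasDerivAt_id x).sub_const (2 * l)).fun_mul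
      (hasDerivAt_gaussianPDFReal_zero_one x)).fun_neg.congr_deriv (by simp only [id]; ring)
  have hint : Integrable (fun x => gaussianPDFReal 0 1 x * (x - l) ^ 2) :=
    integrable_gaussianPDFReal_mul one_ne_zero
      ((memLp_id_gaussianReal 2).sub (memLp_const l)).integrable_sq
  have hlim : Tendsto (fun x => -((x - 2 * l) * gaussianPDFReal 0 1 x)) atTop (𝓝 0) := by
    simpa [sub_mul] using ((tendsto_rpow_mul_gaussianPDFReal_zero_one_atTop 1).sub
      ((tendsto_rpow_mul_gaussianPDFReal_zero_one_atTop 0).const_mul (2 * l))).neg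
  have hftc := integral_Ioi_of_hasDerivAt_of_tendsto' (a := l) (fun x _ => hderiv x)
    (hint.sub ((integrable_gaussianPDFReal 0 1).const_mul _)).integrableOn hlim
  rw [integral_sub hint.integrableOn ((integrable_gaussianPDFReal 0 1).const_mul _).integrableOn,
    integral_const_mul] at hftc
  linarith

lemma integral_max_abs_sub_sq_gaussianReal {l : ℝ} (hl : 0 ≤ l) :
    ∫ x, max (|x| - l) 0 ^ 2 ∂gaussianReal 0 1 =
      (1 + l ^ 2) * erfc (l / √2) - √(2 / π) * l * exp (-l ^ 2 / 2) := by
  set ψ := (Ioi l).indicator fun x => (x - l) ^ 2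
  have hsplit : ∀ x, max (|x| - l) 0 ^ 2 = ψ x + ψ (-x) := fun x => by
    simp only [ψ, indicator_apply, mem_Ioi]
    split_ifs with h₁ h₂ h₂
    · linarith
    · rw [abs_of_pos (by linarith), max_eq_left (by linarith), add_zero]
    · rw [abs_of_neg (by linarith), max_eq_left (by linarith), zero_add, neg_sub_left, neg_sq,
        add_comm]
    · rw [max_eq_right (sub_nonpos.2 (abs_le.2 ⟨by linarith, by linarith⟩))]
      norm_num
  have hψ : Integrable ψ (gaussianReal 0 1) :=
    ((memLp_id_gaussianReal 2).sub (memLp_const l)).integrable_sq.indicator measurableSet_Ioi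
  have hψneg : Integrable (fun x => ψ (-x)) (gaussianReal 0 1) := by
    rw [← neg_zero, ← gaussianReal_map_neg] at hψ
    exact (integrable_map_equiv (MeasurableEquiv.neg ℝ) ψ).1 hψ
  have hψint : ∫ x, ψ x ∂gaussianReal 0 1 = ∫ x in Ioi l, gaussianPDFReal 0 1 x * (x - l) ^ 2 := by
    rw [integral_gaussianReal_eq_integral_smul one_ne_zero, ← integral_indicator measurableSet_Ioi]
    congr 1 with x
    simp only [ψ, smul_eq_mul, indicator_mul_right]
  have hsqrt : √(2 / π) = 2 * (√(2 * π))⁻¹ := by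
    rw [sqrt_div zero_le_two, sqrt_mul zero_le_two]
    field_simp
    rw [sq_sqrt zero_le_two]
  simp_rw [hsplit]
  rw [integral_add hψ hψneg, integral_comp_neg_gaussianReal 1 ψ, hψint,
    setIntegral_Ioi_gaussianPDFReal_mul_sub_sq, setIntegral_Ioi_gaussianPDFReal_zero_one_eq_erfc,
    gaussianPDFReal_zero_one, hsqrt]
  ring

lemma abs_sign_le_one (a : ℝ) : |Real.sign a| ≤ 1 := by
  rcases Real.sign_apply_eq a with h | h | h <;> simp [h]

lemma sign_sq_of_ne_zero {a : ℝ} (ha : a ≠ 0) : Real.sign a ^ 2 = 1 := by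
  rcases Real.sign_apply_eq_of_ne_zero a ha with h | h <;> simp [h]

def absSubdifferential (a : ℝ) : Set ℝ := if a = 0 then Icc (-1) 1 else {Real.sign a}

lemma isCompact_absSubdifferential (a : ℝ) : IsCompact (absSubdifferential a) := by
  unfold absSubdifferential
  split_ifs
  exacts [isCompact_Icc, isCompact_singleton]

lemma absSubdifferential_nonempty (a : ℝ) : (absSubdifferential a).Nonempty := by
  unfold absSubdifferential
  split_ifs
  exacts [nonempty_Icc.2 (by norm_num), singleton_nonempty _]

lemma setOf_abs_le_one_and_eq_sign {ι : Type*} (x₀ : EuclideanSpace ℝ ι) :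
    {s : EuclideanSpace ℝ ι | (∀ i, |s i| ≤ 1) ∧ ∀ i, x₀ i ≠ 0 → s i = Real.sign (x₀ i)} =
      {s | ∀ i, s i ∈ absSubdifferential (x₀ i)} := by
  ext s
  simp only [mem_ofPred_eq, ← forall_and]
  refine forall_congr' fun i => ?_
  unfold absSubdifferential
  split_ifs with h
  · simp [h, abs_le]
  · simp only [h, mem_singleton_iff, ne_eq, not_false_eq_true, forall_const]
    exact ⟨And.right, fun hs => ⟨hs ▸ abs_sign_le_one _, hs⟩⟩

lemma smul_setOf_forall_mem {ι : Type*} (C : ι → Set ℝ) (l : ℝ) :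
    l • {s : EuclideanSpace ℝ ι | ∀ i, s i ∈ C i} = {t | ∀ i, t i ∈ l • C i} := by
  ext t
  constructor
  · rintro ⟨s, hs, rfl⟩ i
    exact smul_mem_smul_set (hs i)
  · intro ht
    choose s hs hst using ht
    exact ⟨WithLp.toLp 2 s, hs, by ext i; exact hst i⟩

lemma infDist_sq_setOf_forall_mem {ι : Type*} [Fintype ι] {C : ι → Set ℝ}
    (hC : ∀ i, IsCompact (C i)) (hne : ∀ i, (C i).Nonempty) (x : EuclideanSpace ℝ ι) :
    Metric.infDist x {t | ∀ i, t i ∈ C i} ^ 2 = ∑ i, Metric.infDist (x i) (C i) ^ 2 := by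
  choose p hp hdist using fun i => (hC i).exists_infDist_eq_dist (hne i) (x i)
  have hpC : WithLp.toLp 2 p ∈ {t : EuclideanSpace ℝ ι | ∀ i, t i ∈ C i} := hp
  have hlower : ∀ t ∈ {t : EuclideanSpace ℝ ι | ∀ i, t i ∈ C i},
      √(∑ i, Metric.infDist (x i) (C i) ^ 2) ≤ dist x t := fun t ht => by
    rw [EuclideanSpace.dist_eq]
    gcongr with i
    exacts [Metric.infDist_nonneg, Metric.infDist_le_dist_of_mem (ht i)]
  have hinfDist : Metric.infDist x {t | ∀ i, t i ∈ C i} = √(∑ i, Metric.infDist (x i) (C i) ^ 2) :=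
    le_antisymm ((Metric.infDist_le_dist_of_mem hpC).trans_eq (by
        rw [EuclideanSpace.dist_eq]; simp [hdist]))
      ((Metric.le_infDist ⟨_, hpC⟩).2 hlower)
  rw [hinfDist, sq_sqrt (by positivity)]

lemma infDist_Icc_neg_self {l : ℝ} (hl : 0 ≤ l) (x : ℝ) :
    Metric.infDist x (Icc (-l) l) = max (|x| - l) 0 := by
  refine le_antisymm ?_ ((Metric.le_infDist (nonempty_Icc.2 (by linarith))).2 fun t ht => ?_)
  · rcases le_total x (-l) with hx | hx
    · calc Metric.infDist x (Icc (-l) l) ≤ dist x (-l) :=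
            Metric.infDist_le_dist_of_mem (left_mem_Icc.2 (by linarith))
        _ = max (|x| - l) 0 := by
            rw [Real.dist_eq, abs_of_nonpos (by linarith), abs_of_nonpos (by linarith),
              max_eq_left (by linarith)]
            ring
    rcases le_total x l with hx' | hx'
    · rw [Metric.infDist_zero_of_mem (show x ∈ Icc (-l) l from ⟨hx, hx'⟩)]
      exact le_max_right _ _
    · calc Metric.infDist x (Icc (-l) l) ≤ dist x l :=
            Metric.infDist_le_dist_of_mem (right_mem_Icc.2 (by linarith))
        _ = max (|x| - l) 0 := by
            rw [Real.dist_eq, abs_of_nonneg (by linarith), abs_of_nonneg (by linarith),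
              max_eq_left (by linarith)]
  · rw [Real.dist_eq]
    exact max_le (by linarith [abs_sub_abs_le_abs_sub x t, abs_le.2 ht]) (abs_nonneg _)

lemma smul_Icc_neg_one_one {l : ℝ} (hl : 0 ≤ l) : l • Icc (-1 : ℝ) 1 = Icc (-l) l := by
  rcases hl.eq_or_lt with rfl | hl
  · rw [zero_smul_set (nonempty_Icc.2 (by norm_num)), neg_zero, Icc_self, singleton_zero]
  · rw [LinearOrderedField.smul_Icc hl]
    simp

lemma integrable_infDist_sq_gaussianReal {s : Set ℝ} (hs : s.Nonempty) (μ : ℝ) (v : ℝ≥0) :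
    Integrable (fun x => Metric.infDist x s ^ 2) (gaussianReal μ v) := by
  obtain ⟨y, hy⟩ := hs
  refine ((memLp_id_gaussianReal 2).sub (memLp_const y)).integrable_sq.mono'
    ((Metric.continuous_infDist_pt s).pow 2).aestronglyMeasurable (ae_of_all _ fun x => ?_)
  rw [norm_pow, Real.norm_eq_abs, sq_abs]
  change _ ≤ (x - y) ^ 2
  rw [← sq_abs (x - y), ← Real.dist_eq]
  exact pow_le_pow_left₀ Metric.infDist_nonneg (Metric.infDist_le_dist_of_mem hy) 2

lemma integral_infDist_smul_absSubdifferential_sq {l : ℝ} (hl : 0 ≤ l) (a : ℝ) :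
    ∫ x, Metric.infDist x (l • absSubdifferential a) ^ 2 ∂gaussianReal 0 1 =
      if a = 0 then (1 + l ^ 2) * erfc (l / √2) - √(2 / π) * l * exp (-l ^ 2 / 2)
      else 1 + l ^ 2 := by
  unfold absSubdifferential
  split_ifs with ha
  · simp_rw [smul_Icc_neg_one_one hl, infDist_Icc_neg_self hl]
    exact integral_max_abs_sub_sq_gaussianReal hl
  · simp_rw [smul_set_singleton, Metric.infDist_singleton, Real.dist_eq, sq_abs]
    rw [integral_sub_sq_gaussianReal, smul_eq_mul, zero_sub, neg_sq, mul_pow,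
      sign_sq_of_ne_zero ha]
    simp

lemma integral_sum_comp_eval {ι : Type*} [Fintype ι] (ν : ι → Measure ℝ)
    [∀ i, IsProbabilityMeasure (ν i)] {f : ι → ℝ → ℝ} (hf : ∀ i, Integrable (f i) (ν i)) :
    ∫ x, ∑ i, f i (x i) ∂Measure.pi ν = ∑ i, ∫ y, f i y ∂ν i := by
  rw [integral_finsetSum _ fun i _ => integrable_comp_eval (hf i)]
  exact Finset.sum_congr rfl fun i _ => integral_comp_eval (hf i).aestronglyMeasurable

theorem gaussian_sq_dist_l1 {n : ℕ} (x₀ : EuclideanSpace ℝ (Fin n)) (l : ℝ) (hl : 0 ≤ l)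
    (k : ℕ) (hk : k = (Finset.univ.filter fun i => x₀ i ≠ 0).card)
    (D : Set (EuclideanSpace ℝ (Fin n)))
    (hD : D = {s | (∀ i, |s i| ≤ 1) ∧ ∀ i, x₀ i ≠ 0 → s i = Real.sign (x₀ i)})
    (μ : Measure (EuclideanSpace ℝ (Fin n)))
    (hμ : μ = (Measure.pi fun _ : Fin n => gaussianReal 0 1).map (MeasurableEquiv.toLp 2 (Fin n → ℝ))) :
    ∫ h, Metric.infDist h (l • D) ^ 2 ∂μ =
      k * (1 + l ^ 2) +
        (n - k) * ((1 + l ^ 2) * erfc (l / Real.sqrt 2) -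
          Real.sqrt (2 / π) * l * exp (-l ^ 2 / 2)) := by
  have hdist : ∀ h : Fin n → ℝ, Metric.infDist (MeasurableEquiv.toLp 2 (Fin n → ℝ) h) (l • D) ^ 2 =
      ∑ i, Metric.infDist (h i) (l • absSubdifferential (x₀ i)) ^ 2 := fun h => by
    rw [hD, setOf_abs_le_one_and_eq_sign, smul_setOf_forall_mem,
      infDist_sq_setOf_forall_mem (fun i => (isCompact_absSubdifferential _).smul l)
        (fun i => (absSubdifferential_nonempty _).smul_set)]
    rfl
  have hkn : k ≤ n := hk ▸ (Finset.card_le_univ _).trans_eq (Fintype.card_fin n)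
  have hcard : (Finset.univ.filter fun i => x₀ i = 0).card = n - k := by
    have := Finset.card_filter_add_card_filter_not (s := Finset.univ) (fun i => x₀ i = 0)
    simp only [Finset.card_univ, Fintype.card_fin, ← ne_eq] at this
    omega
  rw [hμ, integral_map_equiv, integral_congr_ae (ae_of_all _ hdist),
    integral_sum_comp_eval _ fun i => integrable_infDist_sq_gaussianReal
      ((absSubdifferential_nonempty _).smul_set) 0 1]
  simp_rw [integral_infDist_smul_absSubdifferential_sq hl]
  rw [Finset.sum_ite, Finset.sum_const, Finset.sum_const, hcard]
  simp only [← ne_eq, ← hk, nsmul_eq_mul, Nat.cast_sub hkn]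
  ring
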